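/- arXiv:2101.00682 — 4 statements merged into one kernel-verified Lean document; each statement's English description precedes it below -/
import Mathlib

section
/- Let o, p, q, m be points of the hyperbolic plane ℍ and R ≥ 0. If p and q lie in the closed ball of radius R centered at o and m is a midpoint of p and q, then dist(o,m) ≤ R − dist(p,q)/2 + 5. -/
open scoped UpperHalfPlane

/-!
In the hyperboloid model `cosh ∘ dist` is the Minkowski form, and the midpoint `M` of `P` and `Q`
is `(P + Q) / (2 cosh (d(p,q)/2))`. Pairing with `O` gives the median identity
`cosh d(o,p) + cosh d(o,q) = 2 cosh d(o,m) cosh (d(p,q)/2)`, whose left side is at most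
`2 cosh R`. Bounding `exp` by `2 cosh` on the right then gives
`exp (d(o,m) + d(p,q)/2) ≤ 4 exp R`, and `log 4 ≤ 5`.
-/

open Real UpperHalfPlane

def minkowski : LinearMap.BilinForm ℝ (Fin 3 → ℝ) :=
  LinearMap.mk₂ ℝ (fun x y => x 0 * y 0 - x 1 * y 1 - x 2 * y 2)
    (fun _ _ _ => by simp only [Pi.add_apply]; ring)
    (fun _ _ _ => by simp only [Pi.smul_apply, smul_eq_mul]; ring)
    (fun _ _ _ => by simp only [Pi.add_apply]; ring)
    (fun _ _ _ => by simp only [Pi.smul_apply, smul_eq_mul]; ring)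

theorem minkowski_apply (x y : Fin 3 → ℝ) :
    minkowski x y = x 0 * y 0 - x 1 * y 1 - x 2 * y 2 := rfl

theorem eq_zero_of_minkowski_self_eq_zero_of_minkowski_eq_zero {v p : Fin 3 → ℝ}
    (hvv : minkowski v v = 0) (hvp : minkowski v p = 0) (hp : 0 < minkowski p p) : v = 0 := by
  have key : v 0 ^ 2 * minkowski p p + (v 1 * p 2 - v 2 * p 1) ^ 2 = 0 := by
    simp only [minkowski_apply] at hvv hvp ⊢
    linear_combination (v 0 * p 0 + v 1 * p 1 + v 2 * p 2) * hvp - (p 1 ^ 2 + p 2 ^ 2) * hvv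
  have h0 : v 0 = 0 := by
    have : v 0 ^ 2 ≤ 0 := by nlinarith [sq_nonneg (v 1 * p 2 - v 2 * p 1)]
    exact pow_eq_zero_iff two_ne_zero |>.mp (le_antisymm this (sq_nonneg _))
  rw [minkowski_apply, h0] at hvv
  have h1 : v 1 = 0 := by nlinarith [sq_nonneg (v 1), sq_nonneg (v 2)]
  have h2 : v 2 = 0 := by nlinarith [sq_nonneg (v 1), sq_nonneg (v 2)]
  ext i; fin_cases i <;> assumption

namespace UpperHalfPlane

/-- The isometry onto the sheet `x₀ > 0` of the hyperboloid `x₀² - x₁² - x₂² = 1`. -/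
noncomputable def toHyperboloid (z : ℍ) : Fin 3 → ℝ :=
  ![(z.re ^ 2 + z.im ^ 2 + 1) / (2 * z.im), z.re / z.im, (z.re ^ 2 + z.im ^ 2 - 1) / (2 * z.im)]

theorem minkowski_toHyperboloid (z w : ℍ) :
    minkowski z.toHyperboloid w.toHyperboloid = cosh (dist z w) := by
  have := z.im_pos
  have := w.im_pos
  rw [cosh_dist', minkowski_apply]
  simp only [toHyperboloid, Matrix.cons_val]
  field_simp
  ring

theorem minkowski_toHyperboloid_self (z : ℍ) : minkowski z.toHyperboloid z.toHyperboloid = 1 := by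
  rw [minkowski_toHyperboloid, dist_self, cosh_zero]

theorem two_mul_cosh_half_dist_smul_toHyperboloid {p q m : ℍ} (hpm : dist p m = dist p q / 2)
    (hmq : dist m q = dist p q / 2) :
    (2 * cosh (dist p q / 2)) • m.toHyperboloid = p.toHyperboloid + q.toHyperboloid := by
  set c := cosh (dist p q / 2)
  have hpq : cosh (dist p q) = 2 * c ^ 2 - 1 := by
    rw [show dist p q = 2 * (dist p q / 2) by ring, cosh_two_mul, cosh_sq']
    ring
  -- `2c • M - P - Q` is null and Minkowski-orthogonal to `P`.
  rw [← sub_eq_zero, ← sub_sub]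
  apply eq_zero_of_minkowski_self_eq_zero_of_minkowski_eq_zero (p := p.toHyperboloid)
  · simp only [map_sub, map_smul, LinearMap.sub_apply, LinearMap.smul_apply, smul_eq_mul,
      minkowski_toHyperboloid]
    rw [dist_comm m p, dist_comm q p, dist_comm q m, hpm, hmq, hpq, dist_self, dist_self, dist_self,
      cosh_zero]
    ring
  · simp only [map_sub, map_smul, LinearMap.sub_apply, LinearMap.smul_apply, smul_eq_mul,
      minkowski_toHyperboloid]
    rw [dist_comm m p, dist_comm q p, hpm, hpq, dist_self, cosh_zero]
    ring
  · rw [minkowski_toHyperboloid_self]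
    exact one_pos

theorem cosh_dist_add_cosh_dist_of_midpoint (o : ℍ) {p q m : ℍ} (hpm : dist p m = dist p q / 2)
    (hmq : dist m q = dist p q / 2) :
    cosh (dist o p) + cosh (dist o q) = 2 * cosh (dist o m) * cosh (dist p q / 2) := by
  have := congrArg (minkowski o.toHyperboloid) (two_mul_cosh_half_dist_smul_toHyperboloid hpm hmq)
  simp only [map_smul, map_add, smul_eq_mul, minkowski_toHyperboloid] at this
  linarith

end UpperHalfPlane

theorem Real.exp_le_two_mul_cosh (x : ℝ) : exp x ≤ 2 * cosh x := by
  rw [cosh_eq]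
  linarith [exp_pos (-x)]

theorem Real.cosh_le_exp_of_nonneg {x : ℝ} (hx : 0 ≤ x) : cosh x ≤ exp x := by
  rw [cosh_eq]
  linarith [exp_le_exp.mpr (neg_le_self hx)]

/-- The midpoint of a segment of length `L` inside an `R`-ball in the hyperbolic plane is
within `R - L/2 + 5` of the center. -/
theorem midpoint_close_to_center (o p q m : ℍ) (R : ℝ) (hR : 0 ≤ R)
    (hp : p ∈ Metric.closedBall o R) (hq : q ∈ Metric.closedBall o R)
    (hpm : dist p m = dist p q / 2) (hmq : dist m q = dist p q / 2) :
    dist o m ≤ R - dist p q / 2 + 5 := by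
  have cosh_le_exp_R {x : ℍ} (hx : x ∈ Metric.closedBall o R) : cosh (dist o x) ≤ exp R := by
    rw [Metric.mem_closedBall, dist_comm] at hx
    calc cosh (dist o x) ≤ cosh R := cosh_le_cosh.mpr (by simpa [abs_of_nonneg hR] using hx)
      _ ≤ exp R := cosh_le_exp_of_nonneg hR
  have hexp : exp (dist o m + dist p q / 2) ≤ exp (R + 5) :=
    calc exp (dist o m + dist p q / 2) = exp (dist o m) * exp (dist p q / 2) := exp_add _ _
      _ ≤ 2 * cosh (dist o m) * (2 * cosh (dist p q / 2)) := by
        gcongr <;> exact exp_le_two_mul_cosh _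
      _ = 2 * (cosh (dist o p) + cosh (dist o q)) := by
        rw [cosh_dist_add_cosh_dist_of_midpoint o hpm hmq]; ring
      _ ≤ 4 * exp R := by linarith [cosh_le_exp_R hp, cosh_le_exp_R hq]
      _ ≤ exp 5 * exp R := by gcongr; linarith [add_one_le_exp (5 : ℝ)]
      _ = exp (R + 5) := by rw [exp_add, mul_comm]
  linarith [exp_le_exp.mp hexp]
end

section
/- Let o, p, q be points of the hyperbolic plane ℍ with dist(o,p) = dist(o,q) = R. Let f be a unit-speed geodesic from p to q and let g be a unit-speed geodesic from p to o. Then for every t with 0 ≤ t ≤ dist(p,q)/2, one has dist(f(t), g(t)) ≤ 20. -/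
/-! In the hyperboloid model `cosh (dist o ·)` is a linear function, which yields the median
identity `cosh (dist o z) + cosh (dist o w) = 2 * cosh (dist z w / 2) * cosh (dist o m)` for the
midpoint `m` of `z` and `w`. Via `exp x / 2 ≤ cosh x ≤ exp x` (for `x ≥ 0`) it becomes
additive: for the midpoint of `p` and `q` it gives `dist o (f t) ≤ R - t + log 4`, and for the
midpoint `m` of `f t` and `g t`, evaluated at `p` and at `o` and combined with
`R ≤ dist p m + dist m o`, it gives `dist (f t) (g t) ≤ log 40`. -/

open scoped UpperHalfPlane

def IsUnitSpeedGeodesic (f : ℝ → ℍ) (a b : ℍ) : Prop :=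
  f 0 = a ∧ f (dist a b) = b ∧
    ∀ s t : ℝ, s ∈ Set.Icc 0 (dist a b) → t ∈ Set.Icc 0 (dist a b) →
      dist (f s) (f t) = |s - t|

open Real

namespace Real

lemma exp_le_two_mul_cosh_s13 (x : ℝ) : exp x ≤ 2 * cosh x := by
  rw [cosh_eq]
  linarith [exp_pos (-x)]

lemma cosh_le_exp_of_nonneg_s13 {x : ℝ} (hx : 0 ≤ x) : cosh x ≤ exp x := by
  rw [cosh_eq]
  linarith [exp_le_exp.mpr (show -x ≤ x by linarith)]

lemma exp_add_le_four_mul_cosh_mul_cosh (x y : ℝ) : exp (x + y) ≤ 4 * (cosh x * cosh y) := by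
  rw [exp_add]
  nlinarith [exp_le_two_mul_cosh_s13 x, exp_le_two_mul_cosh_s13 y, exp_pos x, cosh_pos y]

lemma cosh_half_sq (x : ℝ) : cosh (x / 2) ^ 2 = (1 + cosh x) / 2 := by
  have h := cosh_two_mul (x / 2)
  rw [mul_div_cancel₀ x two_ne_zero] at h
  linarith [cosh_sq (x / 2)]

end Real

namespace UpperHalfPlane

/-- In the hyperboloid model, with `X z = (1, z.re, z.re ^ 2 + z.im ^ 2) / z.im`, this is the point
with `X (hypMidpoint z w) = (X z + X w) / (2 * cosh (dist z w / 2))`. -/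
noncomputable def hypMidpoint (z w : ℍ) : ℍ :=
  ⟨⟨(z.re * w.im + w.re * z.im) / (z.im + w.im),
    2 * cosh (dist z w / 2) * z.im * w.im / (z.im + w.im)⟩, by
    have := z.im_pos; have := w.im_pos; have := cosh_pos (dist z w / 2)
    show 0 < 2 * cosh (dist z w / 2) * z.im * w.im / (z.im + w.im)
    positivity⟩

lemma hypMidpoint_re (z w : ℍ) :
    (hypMidpoint z w).re = (z.re * w.im + w.re * z.im) / (z.im + w.im) := rfl

lemma hypMidpoint_im (z w : ℍ) :
    (hypMidpoint z w).im = 2 * cosh (dist z w / 2) * z.im * w.im / (z.im + w.im) := rfl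

lemma cosh_dist_add_cosh_dist_eq_hypMidpoint (z w o : ℍ) :
    cosh (dist o z) + cosh (dist o w) =
      2 * cosh (dist z w / 2) * cosh (dist o (hypMidpoint z w)) := by
  have hz := z.im_pos
  have hw := w.im_pos
  have ho := o.im_pos
  have hc := cosh_pos (dist z w / 2)
  have hc2 : cosh (dist z w / 2) ^ 2 * (4 * z.im * w.im) =
      (z.re - w.re) ^ 2 + (z.im + w.im) ^ 2 := by
    rw [cosh_half_sq, cosh_dist']
    field_simp
    ring
  rw [cosh_dist', cosh_dist', cosh_dist', hypMidpoint_re, hypMidpoint_im]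
  field_simp
  linear_combination (-(z.im * w.im)) * hc2

lemma eq_hypMidpoint_of_dist_eq_half {z w m : ℍ} (hz : dist z m = dist z w / 2)
    (hw : dist w m = dist z w / 2) : m = hypMidpoint z w := by
  have h := cosh_dist_add_cosh_dist_eq_hypMidpoint z w m
  rw [dist_comm m z, dist_comm m w, hz, hw] at h
  have hc := cosh_pos (dist z w / 2)
  have hcosh : cosh (dist m (hypMidpoint z w)) = 1 := by
    apply mul_left_cancel₀ (mul_pos two_pos hc).ne'
    linarith
  by_contra hne
  exact (one_lt_cosh.mpr (dist_ne_zero.mpr hne)).ne' hcosh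

lemma cosh_dist_add_cosh_dist_of_dist_eq_half {z w m : ℍ} (hz : dist z m = dist z w / 2)
    (hw : dist w m = dist z w / 2) (o : ℍ) :
    cosh (dist o z) + cosh (dist o w) = 2 * cosh (dist z w / 2) * cosh (dist o m) := by
  rw [eq_hypMidpoint_of_dist_eq_half hz hw, cosh_dist_add_cosh_dist_eq_hypMidpoint]

lemma exp_dist_add_half_dist_le {p q m : ℍ} (hp : dist p m = dist p q / 2)
    (hq : dist q m = dist p q / 2) (o : ℍ) :
    exp (dist o m + dist p q / 2) ≤ 2 * (cosh (dist o p) + cosh (dist o q)) :=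
  calc exp (dist o m + dist p q / 2) ≤ 4 * (cosh (dist o m) * cosh (dist p q / 2)) :=
        exp_add_le_four_mul_cosh_mul_cosh _ _
    _ = 2 * (cosh (dist o p) + cosh (dist o q)) := by
        rw [cosh_dist_add_cosh_dist_of_dist_eq_half hp hq]; ring

lemma exp_dist_le_of_dist_eq {p o x y : ℍ} (hxy : dist p x = dist p y)
    (hy : dist p y + dist y o = dist p o) :
    exp (dist x y) ≤ 8 * (exp (dist o x - dist o y) + 1) := by
  set m := hypMidpoint x y
  -- the median identity at `p` and at `o`; the triangle inequality through `m` then eliminates `m`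
  have hp : exp (dist x y / 2 + dist p m) ≤ 4 * exp (dist p y) :=
    calc exp (dist x y / 2 + dist p m) ≤ 4 * (cosh (dist x y / 2) * cosh (dist p m)) :=
          exp_add_le_four_mul_cosh_mul_cosh _ _
      _ = 2 * (cosh (dist p x) + cosh (dist p y)) := by
          rw [cosh_dist_add_cosh_dist_eq_hypMidpoint]; ring
      _ ≤ 4 * exp (dist p y) := by
          rw [hxy]; linarith [cosh_le_exp_of_nonneg_s13 (dist_nonneg (x := p) (y := y))]
  have ho : exp (dist x y / 2 + dist o m) ≤ 2 * (exp (dist o x) + exp (dist o y)) :=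
    calc exp (dist x y / 2 + dist o m) ≤ 4 * (cosh (dist x y / 2) * cosh (dist o m)) :=
          exp_add_le_four_mul_cosh_mul_cosh _ _
      _ = 2 * (cosh (dist o x) + cosh (dist o y)) := by
          rw [cosh_dist_add_cosh_dist_eq_hypMidpoint]; ring
      _ ≤ 2 * (exp (dist o x) + exp (dist o y)) := by
          gcongr <;> exact cosh_le_exp_of_nonneg_s13 dist_nonneg
  have hpo : exp (dist p o) ≤ exp (dist p m + dist o m) :=
    exp_le_exp.mpr (dist_triangle_right _ _ _)
  have hsplit : exp (dist o x) + exp (dist o y) =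
      exp (dist o y) * (exp (dist o x - dist o y) + 1) := by
    rw [exp_sub]; field_simp
  refine le_of_mul_le_mul_right ?_ (exp_pos (dist p o))
  calc exp (dist x y) * exp (dist p o)
      ≤ exp (dist x y) * exp (dist p m + dist o m) := by gcongr
    _ = exp (dist x y / 2 + dist p m) * exp (dist x y / 2 + dist o m) := by
        rw [← exp_add, ← exp_add]; ring_nf
    _ ≤ 4 * exp (dist p y) * (2 * (exp (dist o x) + exp (dist o y))) := by gcongr
    _ = 8 * (exp (dist o x - dist o y) + 1) * exp (dist p o) := by
        rw [hsplit, ← hy, dist_comm y o, exp_add]; ring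

end UpperHalfPlane

namespace IsUnitSpeedGeodesic

variable {f : ℝ → ℍ} {a b : ℍ} {s : ℝ}

lemma dist_left (hf : IsUnitSpeedGeodesic f a b) (hs : s ∈ Set.Icc 0 (dist a b)) :
    dist a (f s) = s := by
  rw [← hf.1, dist_comm, hf.2.2 s 0 hs ⟨le_rfl, dist_nonneg⟩, sub_zero, abs_of_nonneg hs.1]

lemma dist_right (hf : IsUnitSpeedGeodesic f a b) (hs : s ∈ Set.Icc 0 (dist a b)) :
    dist (f s) b = dist a b - s := by
  conv_lhs => rw [← hf.2.1]
  rw [hf.2.2 s _ hs ⟨dist_nonneg, le_rfl⟩, abs_sub_comm, abs_of_nonneg (sub_nonneg.mpr hs.2)]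

lemma exp_dist_sub_le {o p q : ℍ} {R t : ℝ} (hf : IsUnitSpeedGeodesic f p q)
    (hp : dist o p = R) (hq : dist o q = R) (ht0 : 0 ≤ t) (ht : t ≤ dist p q / 2) :
    exp (dist o (f t) - (R - t)) ≤ 4 := by
  have htq : t ∈ Set.Icc 0 (dist p q) := ⟨ht0, by linarith [dist_nonneg (x := p) (y := q)]⟩
  have hmid : dist p q / 2 ∈ Set.Icc 0 (dist p q) :=
    ⟨by positivity, by linarith [dist_nonneg (x := p) (y := q)]⟩
  set m := f (dist p q / 2)
  have hm : exp (dist o m + dist p q / 2) ≤ 4 * exp R := by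
    refine (UpperHalfPlane.exp_dist_add_half_dist_le (hf.dist_left hmid)
      (by rw [dist_comm, hf.dist_right hmid]; ring) o).trans ?_
    rw [hp, hq]
    linarith [cosh_le_exp_of_nonneg_s13 (hp ▸ dist_nonneg : 0 ≤ R)]
  have hfo : dist o (f t) ≤ dist o m + (dist p q / 2 - t) := by
    refine (dist_triangle o m (f t)).trans_eq ?_
    rw [hf.2.2 _ _ hmid htq, abs_of_nonneg (by linarith)]
  calc exp (dist o (f t) - (R - t)) ≤ exp (dist o m + dist p q / 2 - R) :=
        exp_le_exp.mpr (by linarith)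
    _ = exp (dist o m + dist p q / 2) / exp R := exp_sub _ _
    _ ≤ 4 := div_le_of_le_mul₀ (exp_pos R).le (by norm_num) hm

end IsUnitSpeedGeodesic

open UpperHalfPlane

/-- Fellow traveling in the hyperbolic plane with constant `4δ = 20`: for `p, q` on a
sphere centered at `o`, the geodesic from `p` to `q` fellow travels the geodesic from `p`
to `o` until the midpoint of `pq`. -/
theorem fellow_traveling (o p q : ℍ) (R : ℝ)
    (hp : dist o p = R) (hq : dist o q = R)
    (f g : ℝ → ℍ)
    (hf : IsUnitSpeedGeodesic f p q) (hg : IsUnitSpeedGeodesic g p o)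
    (t : ℝ) (ht0 : 0 ≤ t) (ht : t ≤ dist p q / 2) :
    dist (f t) (g t) ≤ 20 := by
  have hpo : dist p o = R := dist_comm p o ▸ hp
  have hto : t ∈ Set.Icc 0 (dist p o) :=
    ⟨ht0, by linarith [dist_triangle p o q, dist_comm o p]⟩
  have htq : t ∈ Set.Icc 0 (dist p q) := ⟨ht0, by linarith [dist_nonneg (x := p) (y := q)]⟩
  have hgo : dist o (g t) = R - t := by rw [dist_comm, hg.dist_right hto, hpo]
  have hK : exp (dist o (f t) - dist o (g t)) ≤ 4 := hgo ▸ hf.exp_dist_sub_le hp hq ht0 ht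
  have hD : exp (dist (f t) (g t)) ≤ 40 := by
    have := exp_dist_le_of_dist_eq (o := o) ((hf.dist_left htq).trans (hg.dist_left hto).symm)
      (by rw [hg.dist_left hto, hg.dist_right hto]; ring)
    linarith
  have h40 : (40 : ℝ) ≤ exp 20 := by linarith [quadratic_le_exp_of_nonneg (x := 20) (by norm_num)]
  exact exp_le_exp.mp (hD.trans h40)
end

section
/- Let Γ be a group acting on the hyperbolic plane ℍ by isometries, let μ ≥ 0, and suppose every nontrivial element has displacement greater than μ + 45: dist(γ • z, z) > μ + 45 for every z ∈ ℍ and every γ ≠ 1. Let X ⊆ ℍ, o ∈ ℍ, R ≥ 0, and γ ∈ Γ with γ ≠ 1 be such that X ⊆ closedBall(o, R) and γ • X ⊆ closedBall(o, R). Then no point w ∈ X ∩ (γ • X) satisfies dist(o, w) ≥ R − μ; that is, X and γ • X do not intersect in the μ-neighborhood of the boundary of the ball. -/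
open scoped UpperHalfPlane
open scoped Pointwise

/-!
Write the common point as `w = γ • x` with `x ∈ X`, and let `m` be the hyperbolic midpoint of `x`
and `w`, so that `γ • m` is the midpoint of `w` and `γ • w`; the points `x`, `w`, `γ • w` all lie
in `closedBall o R`. The function `sinh (dist · · / 2)` satisfies Ptolemy's inequality on `ℍ`.
For the quadruple `o, x, m, w` it shows that the midpoint of a chord of length `d` of the ball
satisfies `sinh (d / 4) * sinh (dist o m / 2) ≤ sinh (R / 2)`; for `m, w, γ • m, o` it then gives
`sinh (dist m (γ • m) / 2) * sinh (dist o w / 2) ≤ 2 * sinh (R / 2)`. Since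
`dist m (γ • m) > μ + 45` and `dist o w ≥ R - μ`, the left side exceeds the right one by a factor
of order `exp (45 / 2)`.
-/

open Real UpperHalfPlane
open scoped MatrixGroups

def IsMetricMidpoint {α : Type*} [PseudoMetricSpace α] (x y m : α) : Prop :=
  dist x m = dist x y / 2 ∧ dist m y = dist x y / 2

theorem Isometry.isMetricMidpoint_midpoint {α : Type*} [PseudoMetricSpace α] {f : ℝ → α}
    (hf : Isometry f) (u v : ℝ) : IsMetricMidpoint (f u) (f v) (f (midpoint ℝ u v)) := by
  constructor <;>
    simp only [hf.dist_eq, dist_left_midpoint, dist_midpoint_right, Real.norm_ofNat] <;> ring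

theorem Real.exp_div_four_le_sinh {u : ℝ} (hu : 1 / 2 ≤ u) : exp u / 4 ≤ sinh u := by
  have h2u : 2 ≤ exp u * exp u := by rw [← exp_add]; linarith [add_one_le_exp (u + u)]
  have hinv : exp (-u) * exp u = 1 := by rw [← exp_add, neg_add_cancel, exp_zero]
  rw [sinh_eq]
  nlinarith [exp_pos u, exp_pos (-u)]

theorem Real.two_mul_sinh_lt_sinh_mul_sinh {r u v : ℝ} (hu : 1 / 2 ≤ u) (hv : 1 / 2 ≤ v)
    (h : r + log 16 ≤ u + v) : 2 * sinh r < sinh u * sinh v := by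
  have hr : 2 * sinh r < exp r := by rw [sinh_eq]; linarith [exp_pos (-r)]
  have h16 : 16 * exp r ≤ exp u * exp v := by
    rw [← exp_log (by norm_num : (0 : ℝ) < 16), ← exp_add, ← exp_add]
    exact exp_le_exp.2 (by linarith)
  nlinarith [exp_div_four_le_sinh hu, exp_div_four_le_sinh hv, exp_pos u, exp_pos v]

namespace UpperHalfPlane

theorem exists_isMetricMidpoint_of_re_eq {x y : ℍ} (h : x.re = y.re) :
    ∃ m, IsMetricMidpoint x y m := by
  have hx : mk ⟨x.re, exp (log x.im)⟩ (exp_pos _) = x := by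
    ext1; apply Complex.ext <;> simp [exp_log x.im_pos]
  have hy : mk ⟨x.re, exp (log y.im)⟩ (exp_pos _) = y := by
    ext1; apply Complex.ext <;> simp [h, exp_log y.im_pos]
  rw [← hx, ← hy]
  exact ⟨_, (isometry_vertical_line x.re).isMetricMidpoint_midpoint _ _⟩

/-- The Cayley transform `z ↦ (z - c + ρ) / (2 * ρ * (c + ρ - z))`, sending `c - ρ` to `0` and
`c + ρ` to `∞`. -/
noncomputable def circleToImAxis (c ρ : ℝ) (hρ : ρ ≠ 0) : SL(2, ℝ) :=
  ⟨!![-1 / (2 * ρ), (c - ρ) / (2 * ρ); 1, -(c + ρ)], by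
    rw [Matrix.det_fin_two_of]; field_simp; ring⟩

theorem re_circleToImAxis_smul {c ρ : ℝ} (hρ : ρ ≠ 0) {z : ℍ}
    (hz : (z.re - c) ^ 2 + z.im ^ 2 = ρ ^ 2) : (circleToImAxis c ρ hρ • z).re = 0 := by
  rw [specialLinearGroup_apply, mk_re, Complex.div_re, ← add_div, div_eq_zero_iff]
  left
  simp [circleToImAxis, -Complex.ofReal_div]
  linear_combination (-1 / (2 * ρ)) * hz

theorem exists_re_smul_eq_re_smul (x y : ℍ) : ∃ g : SL(2, ℝ), (g • x).re = (g • y).re := by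
  by_cases h : x.re = y.re
  · exact ⟨1, by simpa using h⟩
  -- `c` is the point of `ℝ` equidistant from `x` and `y`: the centre of the geodesic through them.
  set c := (x.re ^ 2 + x.im ^ 2 - y.re ^ 2 - y.im ^ 2) / (2 * (x.re - y.re))
  have hpos : 0 < (x.re - c) ^ 2 + x.im ^ 2 := by positivity
  set ρ := √((x.re - c) ^ 2 + x.im ^ 2)
  have hρ : ρ ≠ 0 := (Real.sqrt_pos.2 hpos).ne'
  have hx : (x.re - c) ^ 2 + x.im ^ 2 = ρ ^ 2 := (Real.sq_sqrt hpos.le).symm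
  have hy : (y.re - c) ^ 2 + y.im ^ 2 = ρ ^ 2 := by
    rw [← hx]
    simp only [c]
    field_simp [sub_ne_zero.2 h]
    ring
  exact ⟨circleToImAxis c ρ hρ, by rw [re_circleToImAxis_smul hρ hx, re_circleToImAxis_smul hρ hy]⟩

theorem exists_isMetricMidpoint (x y : ℍ) : ∃ m, IsMetricMidpoint x y m := by
  obtain ⟨g, hg⟩ := exists_re_smul_eq_re_smul x y
  obtain ⟨m, hm⟩ := exists_isMetricMidpoint_of_re_eq hg
  rw [← smul_inv_smul g m, IsMetricMidpoint, dist_smul, dist_smul, dist_smul] at hm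
  exact ⟨g⁻¹ • m, hm⟩

-- Each `sinh (dist p q / 2)` is `‖p - q‖ / (2 * √(p.im * q.im))` and the three products share
-- a denominator, so this is Ptolemy's inequality in `ℂ`.
theorem sinh_half_dist_mul_sinh_half_dist_le (a b c d : ℍ) :
    sinh (dist a c / 2) * sinh (dist b d / 2) ≤
      sinh (dist a b / 2) * sinh (dist c d / 2) + sinh (dist b c / 2) * sinh (dist a d / 2) := by
  have hprod : ∀ p q r s : ℍ, sinh (dist p q / 2) * sinh (dist r s / 2) =
      dist (p : ℂ) q * dist (r : ℂ) s / (4 * √(p.im * q.im * (r.im * s.im))) := by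
    intro p q r s
    rw [sinh_half_dist, sinh_half_dist, div_mul_div_comm,
      Real.sqrt_mul (by positivity : 0 ≤ p.im * q.im)]
    ring
  rw [hprod, hprod, hprod, show b.im * c.im * (a.im * d.im) = a.im * c.im * (b.im * d.im) by ring,
    show a.im * b.im * (c.im * d.im) = a.im * c.im * (b.im * d.im) by ring, ← add_div]
  gcongr
  exact EuclideanGeometry.mul_dist_le_mul_dist_add_mul_dist (a : ℂ) b c d

theorem sinh_quarter_dist_mul_sinh_half_dist_le {o x y m : ℍ} {R : ℝ} (hx : dist o x ≤ R)
    (hy : dist o y ≤ R) (hm : IsMetricMidpoint x y m) :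
    sinh (dist x y / 4) * sinh (dist o m / 2) ≤ sinh (R / 2) := by
  have hptolemy := sinh_half_dist_mul_sinh_half_dist_le o x m y
  rw [hm.1, hm.2, div_div, show dist x y / 2 = 2 * (dist x y / 4) by ring, sinh_two_mul]
    at hptolemy
  norm_num at hptolemy
  set s := sinh (dist x y / 4)
  set t := sinh (dist o m / 2)
  have hxR : sinh (dist o x / 2) ≤ sinh (R / 2) := sinh_le_sinh.2 (by linarith)
  have hyR : sinh (dist o y / 2) ≤ sinh (R / 2) := sinh_le_sinh.2 (by linarith)
  have hs : 0 ≤ s := sinh_nonneg_iff.2 (by positivity)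
  rcases hs.eq_or_lt with hs | hs
  · rw [← hs, zero_mul]
    exact sinh_nonneg_iff.2 (by linarith [dist_nonneg (x := o) (y := x)])
  have htc : t * cosh (dist x y / 4) ≤ sinh (R / 2) := by
    refine le_of_mul_le_mul_left ?_ (by positivity : 0 < 2 * s)
    nlinarith [mul_le_mul_of_nonneg_left hxR hs.le, mul_le_mul_of_nonneg_left hyR hs.le]
  calc s * t ≤ cosh (dist x y / 4) * t :=
        mul_le_mul_of_nonneg_right (sinh_lt_cosh _).le (sinh_nonneg_iff.2 (by positivity))
    _ ≤ sinh (R / 2) := by linarith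

theorem sinh_half_dist_mul_sinh_half_dist_le_of_isMetricMidpoint {o x y z m m' : ℍ} {R : ℝ}
    (hx : dist o x ≤ R) (hy : dist o y ≤ R) (hz : dist o z ≤ R) (hxyz : dist x y = dist y z)
    (hm : IsMetricMidpoint x y m) (hm' : IsMetricMidpoint y z m') :
    sinh (dist m m' / 2) * sinh (dist o y / 2) ≤ 2 * sinh (R / 2) := by
  have hptolemy := sinh_half_dist_mul_sinh_half_dist_le m y m' o
  have hmR := sinh_quarter_dist_mul_sinh_half_dist_le hx hy hm
  have hm'R := sinh_quarter_dist_mul_sinh_half_dist_le hy hz hm'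
  rw [hm.2, hm'.1, ← hxyz, div_div, dist_comm y o, dist_comm m' o, dist_comm m o] at hptolemy
  rw [← hxyz] at hm'R
  norm_num at hptolemy
  linarith

end UpperHalfPlane

theorem translates_disjoint_near_boundary_general {Γ : Type*} [Group Γ] [MulAction Γ ℍ]
    (isom : ∀ (γ : Γ) (z w : ℍ), dist (γ • z) (γ • w) = dist z w)
    (μ : ℝ)
    (disp : ∀ (γ : Γ) (z : ℍ), γ ≠ 1 → μ + 45 < dist (γ • z) z)
    (X : Set ℍ) (o : ℍ) (R : ℝ) (γ : Γ) (hγ : γ ≠ 1)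
    (hX : X ⊆ Metric.closedBall o R) (hγX : γ • X ⊆ Metric.closedBall o R) :
    ∀ w ∈ X ∩ γ • X, ¬(R - μ ≤ dist o w) := by
  rintro _ ⟨hwX, hwγX⟩ hfar
  obtain ⟨x, hxX, rfl⟩ := Set.mem_smul_set.1 hwγX
  have hball : ∀ z ∈ X, dist o z ≤ R := fun z hz ↦ by simpa [dist_comm] using hX hz
  have hγwR : dist o (γ • γ • x) ≤ R := by
    simpa [dist_comm] using hγX (Set.smul_mem_smul_set hwX)
  obtain ⟨m, hm⟩ := exists_isMetricMidpoint x (γ • x)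
  have hγm : IsMetricMidpoint (γ • x) (γ • γ • x) (γ • m) := by
    simpa only [IsMetricMidpoint, isom] using hm
  have hnear := sinh_half_dist_mul_sinh_half_dist_le_of_isMetricMidpoint (hball x hxX)
    (hball _ hwX) hγwR (isom γ x (γ • x)).symm hm hγm
  have hdx := disp γ x hγ
  have hdm := disp γ m hγ
  have htri := dist_triangle_left (γ • x) x o
  have hxR := hball x hxX
  have hwR := hball _ hwX
  have h16 : log 16 ≤ 15 := by linarith [log_le_sub_one_of_pos (by norm_num : (0 : ℝ) < 16)]
  have hsinh := two_mul_sinh_lt_sinh_mul_sinh (r := R / 2) (u := (μ + 45) / 2)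
    (v := dist o (γ • x) / 2) (by linarith) (by linarith [dist_comm x o]) (by linarith)
  have hmono : sinh ((μ + 45) / 2) * sinh (dist o (γ • x) / 2) ≤
      sinh (dist m (γ • m) / 2) * sinh (dist o (γ • x) / 2) :=
    mul_le_mul_of_nonneg_right (sinh_le_sinh.2 (by linarith [dist_comm m (γ • m)]))
      (sinh_nonneg_iff.2 (by positivity))
  linarith

/-- If the infimum displacement of `Γ` acting on the hyperbolic plane is greater than
`μ + 45`, then `Γ`-translates of a set lying in a ball do not intersect in the
`μ`-neighborhood of the boundary of that ball. -/
theorem translates_disjoint_near_boundary {Γ : Type*} [Group Γ] [MulAction Γ ℍ]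
    (isom : ∀ (γ : Γ) (z w : ℍ), dist (γ • z) (γ • w) = dist z w)
    (μ : ℝ) (hμ : 0 ≤ μ)
    (disp : ∀ (γ : Γ) (z : ℍ), γ ≠ 1 → μ + 45 < dist (γ • z) z)
    (X : Set ℍ) (o : ℍ) (R : ℝ) (hR : 0 ≤ R) (γ : Γ) (hγ : γ ≠ 1)
    (hX : X ⊆ Metric.closedBall o R) (hγX : γ • X ⊆ Metric.closedBall o R) :
    ∀ w ∈ X ∩ γ • X, ¬(R - μ ≤ dist o w) :=
  translates_disjoint_near_boundary_general isom μ disp X o R γ hγ hX hγX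
end

section
/- Let X and Y be nonempty finite subsets of the hyperbolic plane ℍ, both contained in closedBall(o, R), let μ ≥ 0, and suppose there is a point q ∈ X ∩ Y with dist(o, q) ≥ R − μ, diam(X)/2 ≤ dist(o, q), and diam(Y)/2 ≤ dist(o, q). If c_X is a barycenter of X and c_Y is a barycenter of Y, then dist(c_X, c_Y) ≤ |diam(X) − diam(Y)|/2 + 90 + 3μ. -/
/-!
For `s = sinh (d / 2)` the hyperbolic plane satisfies the Ptolemy inequality
`s(x,y) s(z,w) ≤ s(x,z) s(y,w) + s(x,w) s(y,z)`, inherited from the Euclidean one since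
`s(x,y) = |x - y| / (2 √(Im x Im y))`. As `exp t ≤ 1 + 2 sinh t` for `t ≥ 0`, this yields Gromov's
four-point condition with constant `2 log 5`.

Let `γ` be the geodesic from `q` to `o` and `D = diam X ≥ μ`. The four-point condition for
`u ∈ X`, `m = γ ((D - μ) / 2)`, `q` and `o` puts `X` within `(D + μ) / 2 + O(1)` of `m`, which bounds
the minimal radius; applied to the barycenter, `m` and two points of `X` at distance close to `D`,
it puts the barycenter within `μ + O(1)` of `m`. (If `D < μ`, the barycenter is within `μ` of
`q = γ 0`.) The points of `γ` obtained for `X` and `Y` are `|diam X - diam Y| / 2` apart.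
-/

open scoped UpperHalfPlane

/-- `c` is a barycenter of `X` if it is the center of a smallest closed ball containing
`X`. -/
def IsBarycenter (X : Set ℍ) (c : ℍ) : Prop :=
  ∃ r : ℝ, 0 ≤ r ∧ X ⊆ Metric.closedBall c r ∧
    ∀ (c' : ℍ) (r' : ℝ), 0 ≤ r' → X ⊆ Metric.closedBall c' r' → r ≤ r'

open Real Set Metric

theorem Real.sinh_le_exp_div_two (t : ℝ) : sinh t ≤ exp t / 2 := by
  rw [sinh_eq]
  linarith [exp_pos (-t)]

theorem Real.exp_le_one_add_two_mul_sinh {t : ℝ} (ht : 0 ≤ t) : exp t ≤ 1 + 2 * sinh t := by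
  rw [sinh_eq]
  linarith [exp_le_one_iff.2 (neg_nonpos.2 ht)]

theorem dist_add_dist_le_of_sinh_ptolemy {X : Type*} [PseudoMetricSpace X] {x y z w : X}
    (h : sinh (dist x y / 2) * sinh (dist z w / 2) ≤
      sinh (dist x z / 2) * sinh (dist y w / 2) + sinh (dist x w / 2) * sinh (dist y z / 2)) :
    dist x y + dist z w ≤ max (dist x z + dist y w) (dist x w + dist y z) + 2 * log 5 := by
  set M := max (dist x z + dist y w) (dist x w + dist y z)
  have hM₁ : dist x z + dist y w ≤ M := le_max_left _ _
  have hM₂ : dist x w + dist y z ≤ M := le_max_right _ _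
  have hxy : dist x y ≤ M := by
    linarith [dist_triangle x z y, dist_triangle x w y, dist_comm z y, dist_comm w y]
  have hzw : dist z w ≤ M := by
    linarith [dist_triangle z x w, dist_triangle z y w, dist_comm z x, dist_comm z y]
  have sinh_mul_sinh_le {a b : ℝ} (ha : 0 ≤ a) (hb : 0 ≤ b) (hab : a + b ≤ M) :
      sinh (a / 2) * sinh (b / 2) ≤ exp (M / 2) / 4 :=
    calc sinh (a / 2) * sinh (b / 2) ≤ exp (a / 2) / 2 * (exp (b / 2) / 2) :=
          mul_le_mul (sinh_le_exp_div_two _) (sinh_le_exp_div_two _) (sinh_nonneg_iff.2 (by positivity)) (by positivity)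
      _ = exp ((a + b) / 2) / 4 := by rw [add_div, exp_add]; ring
      _ ≤ exp (M / 2) / 4 := by gcongr
  have hsxy : 0 ≤ sinh (dist x y / 2) := sinh_nonneg_iff.2 (by positivity)
  have hszw : 0 ≤ sinh (dist z w / 2) := sinh_nonneg_iff.2 (by positivity)
  have hprod := h.trans (add_le_add (sinh_mul_sinh_le dist_nonneg dist_nonneg hM₁)
    (sinh_mul_sinh_le dist_nonneg dist_nonneg hM₂))
  have hexp : exp (dist x y / 2) * exp (dist z w / 2) ≤ 5 * exp (M / 2) := by
    have h1 : 1 ≤ exp (M / 2) := one_le_exp (by linarith [dist_nonneg (x := x) (y := y)])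
    have hexy : exp (dist x y / 2) ≤ exp (M / 2) := by gcongr
    have hezw : exp (dist z w / 2) ≤ exp (M / 2) := by gcongr
    calc exp (dist x y / 2) * exp (dist z w / 2)
        ≤ (1 + 2 * sinh (dist x y / 2)) * (1 + 2 * sinh (dist z w / 2)) :=
          mul_le_mul (exp_le_one_add_two_mul_sinh (by positivity))
            (exp_le_one_add_two_mul_sinh (by positivity)) (exp_pos _).le
            (by linarith)
      _ ≤ 5 * exp (M / 2) := by
          nlinarith [sinh_le_exp_div_two (dist x y / 2), sinh_le_exp_div_two (dist z w / 2)]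
  have := log_le_log (by positivity) hexp
  rw [← exp_add, log_exp, log_mul (by norm_num) (exp_pos _).ne', log_exp] at this
  linarith

namespace UpperHalfPlane

theorem sinh_half_dist_mul_sinh_half_dist (a b c d : ℍ) :
    sinh (dist a b / 2) * sinh (dist c d / 2) =
      dist (a : ℂ) b * dist (c : ℂ) d / (4 * √(a.im * b.im * (c.im * d.im))) := by
  rw [sinh_half_dist, sinh_half_dist, div_mul_div_comm,
    sqrt_mul (mul_pos a.im_pos b.im_pos).le (c.im * d.im)]
  ring

theorem sinh_half_dist_ptolemy (x y z w : ℍ) :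
    sinh (dist x y / 2) * sinh (dist z w / 2) ≤
      sinh (dist x z / 2) * sinh (dist y w / 2) + sinh (dist x w / 2) * sinh (dist y z / 2) := by
  simp only [sinh_half_dist_mul_sinh_half_dist]
  rw [show x.im * z.im * (y.im * w.im) = x.im * y.im * (z.im * w.im) by ring,
    show x.im * w.im * (y.im * z.im) = x.im * y.im * (z.im * w.im) by ring, ← add_div]
  gcongr
  have := EuclideanGeometry.mul_dist_le_mul_dist_add_mul_dist (x : ℂ) z y w
  rw [dist_comm (z : ℂ) y] at this
  linarith [mul_comm (dist (x : ℂ) w) (dist (y : ℂ) z)]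

theorem dist_add_dist_le_max (x y z w : ℍ) :
    dist x y + dist z w ≤ max (dist x z + dist y w) (dist x w + dist y z) + 2 * log 5 :=
  dist_add_dist_le_of_sinh_ptolemy (sinh_half_dist_ptolemy x y z w)

theorem dist_le_max_of_dist_add_dist_eq {q m o : ℍ} (hm : dist q m + dist m o = dist q o)
    (u : ℍ) : dist u m ≤ max (dist u q - dist q m) (dist u o - dist m o) + 2 * log 5 := by
  have h := dist_add_dist_le_max u m q o
  have hmax : max (dist u q - dist q m) (dist u o - dist m o) =
      max (dist u q + dist m o) (dist u o + dist m q) - dist q o := by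
    rw [← hm, ← max_sub_sub_right, dist_comm m q]
    congr 1 <;> ring
  linarith

noncomputable def semicircleGeodesic (c : ℝ) {ρ : ℝ} (hρ : 0 < ρ) (t : ℝ) : ℍ :=
  mk ⟨c + ρ * tanh t, ρ / cosh t⟩ (by dsimp; positivity)

theorem isometry_semicircleGeodesic (c : ℝ) {ρ : ℝ} (hρ : 0 < ρ) :
    Isometry (semicircleGeodesic c hρ) := by
  refine Isometry.of_dist_eq fun a b => ?_
  have hcosh : cosh (dist (semicircleGeodesic c hρ a) (semicircleGeodesic c hρ b)) =
      cosh (a - b) := by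
    rw [cosh_dist, Complex.dist_eq, Complex.sq_norm, Complex.normSq_apply]
    simp only [semicircleGeodesic, Complex.sub_re, Complex.sub_im, coe_mk, im,
      tanh_eq_sinh_div_cosh, cosh_sub]
    have ha := cosh_sq a
    have hb := cosh_sq b
    have := cosh_pos a
    have := cosh_pos b
    field_simp
    linear_combination (-ρ ^ 2 * cosh a ^ 2) * hb + (-ρ ^ 2 * cosh b ^ 2) * ha
  rw [Real.dist_eq, ← abs_of_nonneg (dist_nonneg : 0 ≤ dist (semicircleGeodesic c hρ a) _)]
  exact le_antisymm (cosh_le_cosh.1 hcosh.le) (cosh_le_cosh.1 hcosh.ge)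

theorem mem_range_semicircleGeodesic {c ρ : ℝ} (hρ : 0 < ρ) {z : ℍ}
    (hz : (z.re - c) ^ 2 + z.im ^ 2 = ρ ^ 2) : z ∈ range (semicircleGeodesic c hρ) := by
  have hz₀ := z.im_pos
  have hcosh : cosh (arsinh ((z.re - c) / z.im)) = ρ / z.im := by
    rw [cosh_arsinh, ← sqrt_sq (div_pos hρ hz₀).le]
    congr 1
    field_simp
    linear_combination hz
  refine ⟨arsinh ((z.re - c) / z.im), UpperHalfPlane.ext (Complex.ext ?_ ?_)⟩
  · change c + ρ * tanh _ = z.re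
    rw [tanh_eq_sinh_div_cosh, sinh_arsinh, hcosh]
    field_simp
    ring
  · change ρ / cosh _ = z.im
    rw [hcosh]
    field_simp

theorem exists_isometry_mem_range (z w : ℍ) :
    ∃ γ : ℝ → ℍ, Isometry γ ∧ z ∈ range γ ∧ w ∈ range γ := by
  by_cases hre : z.re = w.re
  · refine ⟨_, isometry_vertical_line z.re, ⟨log z.im, ?_⟩, ⟨log w.im, ?_⟩⟩ <;>
      apply UpperHalfPlane.ext <;> apply Complex.ext <;> simp [exp_log, im_pos, hre]
  · set c := (z.re ^ 2 + z.im ^ 2 - w.re ^ 2 - w.im ^ 2) / (2 * (z.re - w.re))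
    have hc : 2 * (z.re - w.re) * c = z.re ^ 2 + z.im ^ 2 - w.re ^ 2 - w.im ^ 2 :=
      mul_div_cancel₀ _ (mul_ne_zero two_ne_zero (sub_ne_zero.2 hre))
    have hzw : (z.re - c) ^ 2 + z.im ^ 2 = (w.re - c) ^ 2 + w.im ^ 2 := by
      linear_combination -hc
    have hρ : 0 < √((z.re - c) ^ 2 + z.im ^ 2) := sqrt_pos.2 (by positivity)
    refine ⟨_, isometry_semicircleGeodesic c hρ, mem_range_semicircleGeodesic hρ ?_,
      mem_range_semicircleGeodesic hρ ?_⟩ <;> rw [sq_sqrt (by positivity)]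
    exact hzw.symm

end UpperHalfPlane

theorem Isometry.exists_isometry_apply_zero_apply_dist {X : Type*} [PseudoMetricSpace X]
    {γ : ℝ → X} (hγ : Isometry γ) {z w : X} (hz : z ∈ range γ) (hw : w ∈ range γ) :
    ∃ g : ℝ → X, Isometry g ∧ g 0 = z ∧ g (dist z w) = w := by
  obtain ⟨s, rfl⟩ := hz
  obtain ⟨u, rfl⟩ := hw
  rw [hγ.dist_eq, Real.dist_eq]
  rcases le_total s u with h | h
  · refine ⟨γ ∘ IsometryEquiv.addLeft s, hγ.comp (IsometryEquiv.addLeft s).isometry, by simp, ?_⟩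
    simp [abs_of_nonpos (sub_nonpos.2 h)]
  · refine ⟨γ ∘ IsometryEquiv.subLeft s, hγ.comp (IsometryEquiv.subLeft s).isometry, by simp, ?_⟩
    simp [abs_of_nonneg (sub_nonneg.2 h)]

theorem UpperHalfPlane.exists_geodesic (z w : ℍ) :
    ∃ γ : ℝ → ℍ, Isometry γ ∧ γ 0 = z ∧ γ (dist z w) = w :=
  let ⟨_, hγ, hz, hw⟩ := exists_isometry_mem_range z w
  hγ.exists_isometry_apply_zero_apply_dist hz hw

namespace IsBarycenter

variable {X : Set ℍ} {c : ℍ}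

theorem dist_le_diam (hc : IsBarycenter X c) (hX : Bornology.IsBounded X) {q : ℍ} (hq : q ∈ X) :
    dist c q ≤ diam X := by
  obtain ⟨r, -, hXc, hmin⟩ := hc
  calc dist c q ≤ r := by rw [dist_comm]; exact hXc hq
    _ ≤ diam X := hmin q _ diam_nonneg fun u hu => mem_closedBall.2 (dist_le_diam_of_mem hX hu hq)

theorem dist_add_diam_le (hc : IsBarycenter X c) (hne : X.Nonempty) {m : ℍ} {r : ℝ}
    (hm : X ⊆ closedBall m r) : dist c m + diam X ≤ 2 * r + 2 * log 5 := by
  obtain ⟨r₀, -, hXc, hmin⟩ := hc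
  obtain ⟨x₀, hx₀⟩ := hne
  have hr : r₀ ≤ r := hmin m r (dist_nonneg.trans (hm hx₀)) hm
  have hdiam : ∀ x ∈ X, ∀ y ∈ X, dist x y ≤ 2 * r + 2 * log 5 - dist c m := by
    intro x hx y hy
    have := UpperHalfPlane.dist_add_dist_le_max c m x y
    have hcx := mem_closedBall'.1 (hXc hx)
    have hcy := mem_closedBall'.1 (hXc hy)
    have hmx := mem_closedBall'.1 (hm hx)
    have hmy := mem_closedBall'.1 (hm hy)
    have := max_le (add_le_add (hcx.trans hr) hmy) (add_le_add (hcy.trans hr) hmx)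
    linarith
  have := diam_le_of_forall_dist_le ((dist_self x₀).symm.trans_le (hdiam x₀ hx₀ x₀ hx₀)) hdiam
  linarith

theorem dist_geodesic_le (hc : IsBarycenter X c) {o q : ℍ} {R μ : ℝ} (hμ : 0 ≤ μ)
    (hXo : X ⊆ closedBall o R) (hq : q ∈ X) (hqμ : R - μ ≤ dist o q)
    (hX2 : diam X / 2 ≤ dist o q) {γ : ℝ → ℍ} (hγ : Isometry γ) (hγ0 : γ 0 = q)
    (hγo : γ (dist q o) = o) :
    dist c (γ (max 0 ((diam X - μ) / 2))) ≤ μ + 6 * log 5 := by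
  have hX : Bornology.IsBounded X := isBounded_closedBall.subset hXo
  have hlog : 0 ≤ log 5 := log_nonneg (by norm_num)
  rcases lt_or_ge (diam X) μ with hsmall | hlarge
  · rw [max_eq_left (by linarith), hγ0]
    linarith [hc.dist_le_diam hX hq]
  have ht₀ : 0 ≤ (diam X - μ) / 2 := by linarith
  have htq : (diam X - μ) / 2 ≤ dist q o := by rw [dist_comm]; linarith
  set t := (diam X - μ) / 2 with ht
  rw [max_eq_right (by linarith)]
  have hqγ : dist q (γ t) = t := by
    rw [← hγ0, hγ.dist_eq, Real.dist_eq, zero_sub, abs_neg, abs_of_nonneg ht₀]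
  have hγo' : dist (γ t) o = dist q o - t := by
    conv_lhs => rw [← hγo]
    rw [hγ.dist_eq, Real.dist_eq, abs_sub_comm, abs_of_nonneg (sub_nonneg.2 htq)]
  have hmid : dist q (γ t) + dist (γ t) o = dist q o := by rw [hqγ, hγo']; ring
  have hball : X ⊆ closedBall (γ t) ((diam X + μ) / 2 + 2 * log 5) := by
    intro u hu
    have h := UpperHalfPlane.dist_le_max_of_dist_add_dist_eq hmid u
    rw [hqγ, hγo'] at h
    have huq := dist_le_diam_of_mem hX hu hq
    have huo := mem_closedBall.1 (hXo hu)
    have := max_le (a := dist u q - t) (b := dist u o - (dist q o - t)) (c := (diam X + μ) / 2)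
      (by rw [ht]; linarith) (by rw [ht]; linarith [dist_comm o q])
    rw [mem_closedBall]
    linarith
  linarith [hc.dist_add_diam_le ⟨q, hq⟩ hball]

end IsBarycenter

theorem barycenters_distance_general (X Y : Set ℍ)
    (o : ℍ) (R : ℝ)
    (hXR : X ⊆ Metric.closedBall o R) (hYR : Y ⊆ Metric.closedBall o R)
    (μ : ℝ) (hμ : 0 ≤ μ)
    (q : ℍ) (hqX : q ∈ X) (hqY : q ∈ Y) (hqμ : R - μ ≤ dist o q)
    (hX2 : Metric.diam X / 2 ≤ dist o q) (hY2 : Metric.diam Y / 2 ≤ dist o q)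
    (cX cY : ℍ) (hcX : IsBarycenter X cX) (hcY : IsBarycenter Y cY) :
    dist cX cY ≤ |Metric.diam X - Metric.diam Y| / 2 + 90 + 3 * μ := by
  obtain ⟨γ, hγ, hγ0, hγo⟩ := UpperHalfPlane.exists_geodesic q o
  have hX := hcX.dist_geodesic_le hμ hXR hqX hqμ hX2 hγ hγ0 hγo
  have hY := hcY.dist_geodesic_le hμ hYR hqY hqμ hY2 hγ hγ0 hγo
  have hXY : dist (γ (max 0 ((diam X - μ) / 2))) (γ (max 0 ((diam Y - μ) / 2))) ≤
      |diam X - diam Y| / 2 := by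
    rw [hγ.dist_eq, Real.dist_eq, max_comm 0, max_comm 0]
    refine (abs_max_sub_max_le_abs _ _ 0).trans_eq ?_
    rw [← sub_div, sub_sub_sub_cancel_right, abs_div, abs_two]
  have hlog : log 5 ≤ 4 := (log_le_sub_one_of_pos (by norm_num)).trans_eq (by norm_num)
  linarith [dist_triangle4_right cX cY (γ (max 0 ((diam X - μ) / 2)))
    (γ (max 0 ((diam Y - μ) / 2)))]

/-- Barycenters of two sets in a ball that share a near-boundary point are
`|diam X - diam Y|/2`-apart, up to the error `90 + 3μ`. -/
theorem barycenters_distance (X Y : Set ℍ) (hXfin : X.Finite) (hXne : X.Nonempty)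
    (hYfin : Y.Finite) (hYne : Y.Nonempty)
    (o : ℍ) (R : ℝ) (hR : 0 ≤ R)
    (hXR : X ⊆ Metric.closedBall o R) (hYR : Y ⊆ Metric.closedBall o R)
    (μ : ℝ) (hμ : 0 ≤ μ)
    (q : ℍ) (hqX : q ∈ X) (hqY : q ∈ Y) (hqμ : R - μ ≤ dist o q)
    (hX2 : Metric.diam X / 2 ≤ dist o q) (hY2 : Metric.diam Y / 2 ≤ dist o q)
    (cX cY : ℍ) (hcX : IsBarycenter X cX) (hcY : IsBarycenter Y cY) :
    dist cX cY ≤ |Metric.diam X - Metric.diam Y| / 2 + 90 + 3 * μ :=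
  barycenters_distance_general X Y o R hXR hYR μ hμ q hqX hqY hqμ hX2 hY2 cX cY hcX hcY
end
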